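/- Every matroid M has a weakly round restriction N such that ε(N) ≥ φ^{r(N) - r(M)}·ε(M), where φ = (1+√5)/2 and ε denotes the number of points (rank-1 flats). -/

import Mathlib

open Matroid Set

namespace GrowthRate

variable {α : Type*}

/-- The rank of a set in a matroid: the supremum of cardinalities of independent subsets. -/
noncomputable def eRk (M : Matroid α) (X : Set α) : ℕ∞ :=
  ⨆ I ∈ {I : Set α | M.Indep I ∧ I ⊆ X}, I.encard

/-- The rank of a matroid. -/
noncomputable def eRank (M : Matroid α) : ℕ∞ := eRk M M.E

/-- Rank as a natural number (for finite matroids). -/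
noncomputable def rk (M : Matroid α) (X : Set α) : ℕ := (eRk M X).toNat

/-- Rank of a matroid as a natural number. -/
noncomputable def rank (M : Matroid α) : ℕ := (eRank M).toNat

/-- Deletion of a set of elements. -/
noncomputable def delete (M : Matroid α) (D : Set α) : Matroid α := M ↾ (M.E \ D)

/-- Contraction of a set of elements, defined via duality. -/
noncomputable def contract (M : Matroid α) (C : Set α) : Matroid α := (delete M✶ C)✶

/-- `N` is a minor of `M` if it is obtained by a contraction followed by a deletion. -/
def IsMinor (N M : Matroid α) : Prop := ∃ C D : Set α, N = delete (contract M C) D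

/-- The number of points (rank-one flats) of `M` contained in `X`. -/
noncomputable def nPoints (M : Matroid α) (X : Set α) : ℕ :=
  {P : Set α | M.IsFlat P ∧ eRk M P = 1 ∧ P ⊆ X}.ncard

/-- `ε(M)`: the number of points (rank-one flats) of `M`. -/
noncomputable def eps (M : Matroid α) : ℕ := {P : Set α | M.IsFlat P ∧ eRk M P = 1}.ncard

/-- A matroid is simple if all singletons and pairs of ground elements are independent. -/
def Simple (M : Matroid α) : Prop :=
  ∀ e ∈ M.E, ∀ f ∈ M.E, M.Indep {e} ∧ (e ≠ f → M.Indep {e, f})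

/-- `M` has a `U_{2,m}`-minor: a minor that is simple of rank two with `m` elements. -/
def HasUnifLineMinor (M : Matroid α) (m : ℕ) : Prop :=
  ∃ N : Matroid α, IsMinor N M ∧ eRank N = 2 ∧ Simple N ∧ N.E.encard = m

/-- A matroid is weakly round if its ground set is not the union of a set of rank
at most `r(M)-2` and a set of rank at most `r(M)-1`. -/
def WeaklyRound (M : Matroid α) : Prop :=
  ¬ ∃ A B : Set α, A ∪ B = M.E ∧ eRk M A + 2 ≤ eRank M ∧ eRk M B + 1 ≤ eRank M

/-- `q` is a prime power. -/
def IsPrimePower (q : ℕ) : Prop := ∃ p n : ℕ, p.Prime ∧ 0 < n ∧ q = p ^ n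

/-- `M` is isomorphic to the projective geometry `PG(n-1, |F|)` over the finite field `F`:
there is a representation `f` of `M` by vectors in `F^n` such that distinct elements get
non-parallel vectors and every direction in `F^n` is represented. -/
def IsPG (M : Matroid α) (F : Type) [Field F] [Fintype F] (n : ℕ) : Prop :=
  ∃ f : α → (Fin n → F),
    (∀ I ⊆ M.E, (M.Indep I ↔ LinearIndependent F (fun x : I => f x))) ∧
    (∀ e ∈ M.E, ∀ e' ∈ M.E, ∀ c : F, f e' = c • f e → e = e') ∧
    (∀ v : Fin n → F, v ≠ 0 → ∃ e ∈ M.E, ∃ c : F, c ≠ 0 ∧ v = c • f e)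

/-- `M` is `(q,k)`-overfull. -/
noncomputable def Overfull (M : Matroid α) (q k : ℕ) : Prop :=
  ((q : ℚ) ^ (rank M + k) - 1) / ((q : ℚ) - 1)
      - (q : ℚ) * ((q : ℚ) ^ (2 * k) - 1) / ((q : ℚ) ^ 2 - 1) < (eps M : ℚ)

/-!
Weight each restriction `M ↾ Y` by its golden density `ε(M ↾ Y) / φ ^ r(M ↾ Y)` and argue
by strong induction on the rank that some weakly round restriction has density at least that
of `M`.
If `M ↾ Y` is not weakly round, then `Y = A ∪ B` with `r(A) ≤ r(Y) - 2` and `r(B) ≤ r(Y) - 1`.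
Every point of `M ↾ Y` meets `A` or `B` in a nonloop, so `ε(Y) ≤ ε(A) + ε(B)`; since
`φ ^ (r - 2) + φ ^ (r - 1) = φ ^ r`, one of `A`, `B` has density at least that of `Y`.
-/

open scoped goldenRatio

lemma eRk_eq_matroid_eRk (M : Matroid α) (X : Set α) : eRk M X = M.eRk X := by
  obtain ⟨I, hI⟩ := M.exists_isBasis' X
  refine le_antisymm (iSup₂_le fun J hJ => hJ.1.encard_le_eRk_of_subset hJ.2) ?_
  rw [← hI.encard_eq_eRk]
  exact le_iSup₂_of_le I ⟨hI.indep, hI.subset⟩ le_rfl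

lemma eRank_eq_matroid_eRank (M : Matroid α) : eRank M = M.eRank := by
  rw [eRank, eRk_eq_matroid_eRk, eRk_ground]

lemma cast_rank (M : Matroid α) [M.RankFinite] : (rank M : ℕ∞) = M.eRank := by
  rw [rank, eRank_eq_matroid_eRank, ENat.natCast_toNat (M.eRank_ne_top_iff.2 ‹_›)]

lemma isFlat_and_eRk_eq_one_iff {M : Matroid α} {P : Set α} :
    M.IsFlat P ∧ M.eRk P = 1 ↔ ∃ e, M.IsNonloop e ∧ M.closure {e} = P := by
  constructor
  · rintro ⟨hP, hrk⟩
    obtain ⟨I, hI⟩ := M.exists_isBasis' P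
    obtain ⟨e, rfl⟩ := encard_eq_one.1 (hI.encard_eq_eRk.trans hrk)
    exact ⟨e, indep_singleton.1 hI.indep, hI.closure_eq_closure.trans hP.closure⟩
  · rintro ⟨e, he, rfl⟩
    exact ⟨M.isFlat_closure _, by rw [eRk_closure_eq, he.eRk_eq]⟩

lemma eps_eq_ncard_image_closure (M : Matroid α) :
    eps M = ((fun e => M.closure {e}) '' {e | M.IsNonloop e}).ncard := by
  simp_rw [eps, eRk_eq_matroid_eRk, isFlat_and_eRk_eq_one_iff]
  rfl

lemma closure_restrict_closure_singleton {M : Matroid α} {A : Set α} {e : α} (hA : A ⊆ M.E)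
    (he : e ∈ A) : M.closure ((M ↾ A).closure {e}) = M.closure {e} := by
  rw [restrict_closure_eq M (singleton_subset_iff.2 he) hA]
  refine (closure_subset_closure_of_subset_closure inter_subset_left).antisymm
    (M.closure_subset_closure ?_)
  exact singleton_subset_iff.2 ⟨M.mem_closure_self e (hA he), he⟩

lemma ncard_image_closure_le_eps_restrict (M : Matroid α) [M.Finite] {A : Set α}
    (hA : A ⊆ M.E) :
    ((fun e => M.closure {e}) '' {e | M.IsNonloop e ∧ e ∈ A}).ncard ≤ eps (M ↾ A) := by
  have hfin : {e | M.IsNonloop e ∧ e ∈ A}.Finite :=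
    M.ground_finite.subset fun e he => he.1.mem_ground
  rw [eps_eq_ncard_image_closure]
  simp_rw [restrict_isNonloop_iff]
  calc _ = (M.closure '' ((fun e => (M ↾ A).closure {e}) ''
          {e | M.IsNonloop e ∧ e ∈ A})).ncard := by
        rw [image_image]
        exact congrArg ncard
          (image_congr fun e he => (closure_restrict_closure_singleton hA he.2).symm)
    _ ≤ _ := ncard_image_le (hfin.image _)

lemma eps_le_eps_restrict_add_eps_restrict (M : Matroid α) [M.Finite] {A B : Set α}
    (hAB : A ∪ B = M.E) : eps M ≤ eps (M ↾ A) + eps (M ↾ B) := by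
  have hnonloop : {e | M.IsNonloop e}
      = {e | M.IsNonloop e ∧ e ∈ A} ∪ {e | M.IsNonloop e ∧ e ∈ B} := by
    ext e
    change M.IsNonloop e ↔ (M.IsNonloop e ∧ e ∈ A) ∨ (M.IsNonloop e ∧ e ∈ B)
    rw [← and_or_left, ← mem_union, hAB]
    exact ⟨fun h => ⟨h, h.mem_ground⟩, And.left⟩
  rw [eps_eq_ncard_image_closure, hnonloop, image_union]
  exact (ncard_union_le _ _).trans (add_le_add
    (ncard_image_closure_le_eps_restrict M (hAB ▸ subset_union_left))
    (ncard_image_closure_le_eps_restrict M (hAB ▸ subset_union_right)))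

lemma div_goldenRatio_pow_le_or_le {x y z : ℝ} {a b n : ℕ} (hz : 0 ≤ z) (hxyz : z ≤ x + y)
    (ha : a + 2 ≤ n) (hb : b + 1 ≤ n) :
    z / φ ^ n ≤ x / φ ^ a ∨ z / φ ^ n ≤ y / φ ^ b := by
  by_contra! h
  obtain ⟨hx, hy⟩ := h
  set t := z / φ ^ n
  have ht : 0 ≤ t := by positivity
  have hzt : z = t * φ ^ n := (div_mul_cancel₀ z (by positivity)).symm
  rw [div_lt_iff₀ (by positivity)] at hx hy
  have hpa : φ ^ a * φ ^ 2 ≤ φ ^ n := by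
    rw [← pow_add]; exact pow_le_pow_right₀ Real.one_lt_goldenRatio.le ha
  have hpb : φ ^ b * φ ≤ φ ^ n := by
    rw [← pow_succ]; exact pow_le_pow_right₀ Real.one_lt_goldenRatio.le hb
  -- `φ² z ≤ φ² x + φ (φ y) < t φ^(a+2) + φ t φ^(b+1) ≤ t φ^n (1 + φ) = φ² z`
  nlinarith [Real.goldenRatio_sq, Real.goldenRatio_pos, mul_le_mul_of_nonneg_left hpa ht,
    mul_le_mul_of_nonneg_left hpb ht]

noncomputable def goldenDensity (M : Matroid α) : ℝ := eps M / φ ^ rank M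

lemma exists_cover_of_not_weaklyRound {M : Matroid α} [M.RankFinite] (h : ¬ WeaklyRound M) :
    ∃ A B, A ∪ B = M.E ∧ rank (M ↾ A) + 2 ≤ rank M ∧ rank (M ↾ B) + 1 ≤ rank M := by
  obtain ⟨A, B, hAB, hA, hB⟩ := not_not.1 h
  simp only [eRk_eq_matroid_eRk, eRank_eq_matroid_eRank, ← eRank_restrict, ← cast_rank] at hA hB
  exact ⟨A, B, hAB, by exact_mod_cast hA, by exact_mod_cast hB⟩

theorem exists_weaklyRound_restrict_goldenDensity_ge (M : Matroid α) [M.Finite] :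
    ∃ X ⊆ M.E, WeaklyRound (M ↾ X) ∧ goldenDensity M ≤ goldenDensity (M ↾ X) := by
  induction hn : rank M using Nat.strong_induction_on generalizing M with
  | _ n ih =>
    by_cases hM : WeaklyRound M
    · rw [← restrict_ground_eq_self M] at hM
      exact ⟨M.E, Subset.rfl, hM, by rw [restrict_ground_eq_self]⟩
    obtain ⟨A, B, hAB, hA, hB⟩ := exists_cover_of_not_weaklyRound hM
    have descend (C : Set α) (hC : C ⊆ M.E) (hlt : rank (M ↾ C) < n)
        (hle : goldenDensity M ≤ goldenDensity (M ↾ C)) :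
        ∃ X ⊆ M.E, WeaklyRound (M ↾ X) ∧ goldenDensity M ≤ goldenDensity (M ↾ X) := by
      have : (M ↾ C).Finite := restrict_finite (M.ground_finite.subset hC)
      obtain ⟨X, hXC : X ⊆ C, hX, hXle⟩ := ih _ hlt (M ↾ C) rfl
      rw [restrict_restrict_eq M hXC] at hX hXle
      exact ⟨X, hXC.trans hC, hX, hle.trans hXle⟩
    have hsplit : (eps M : ℝ) ≤ eps (M ↾ A) + eps (M ↾ B) := by
      exact_mod_cast eps_le_eps_restrict_add_eps_restrict M hAB
    rcases div_goldenRatio_pow_le_or_le (Nat.cast_nonneg _) hsplit hA hB with h | h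
    · exact descend A (hAB ▸ subset_union_left) (by omega) h
    · exact descend B (hAB ▸ subset_union_right) (by omega) h

/-- Every matroid `M` has a weakly round restriction `N` with
`ε(N) ≥ φ^(r(N) - r(M)) · ε(M)`, where `φ` is the golden ratio. -/
theorem statement_2 {α : Type*} (M : Matroid α) [M.Finite] :
    ∃ X : Set α, X ⊆ M.E ∧ WeaklyRound (M ↾ X) ∧
      ((1 + Real.sqrt 5) / 2) ^ ((rank (M ↾ X) : ℝ) - (rank M : ℝ)) * (eps M : ℝ)
        ≤ (eps (M ↾ X) : ℝ) := by
  obtain ⟨X, hXE, hX, hle⟩ := exists_weaklyRound_restrict_goldenDensity_ge M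
  refine ⟨X, hXE, hX, ?_⟩
  change φ ^ _ * _ ≤ _
  rw [Real.rpow_sub Real.goldenRatio_pos, Real.rpow_natCast, Real.rpow_natCast,
    div_mul_eq_mul_div, div_le_iff₀ (by positivity)]
  rwa [goldenDensity, goldenDensity, div_le_div_iff₀ (by positivity) (by positivity),
    mul_comm] at hle

end GrowthRate
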